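/- If A ∈ 𝐔_m is an extreme point of 𝐔_m, then every diagonal entry a_{ii} equals 0 or 1, and every off-diagonal entry a_{ij} (i ≠ j) equals 0, 1/2, or 1. -/

import Mathlib

open Matrix Finset

def IsInU {m : ℕ} (A : Matrix (Fin m) (Fin m) ℝ) : Prop :=
  A.IsSymm ∧ (∀ i j, 0 ≤ A i j) ∧
    ∀ α : Finset (Fin m), ∑ i ∈ α, ∑ j ∈ α, A i j ≤ (α.card : ℝ)

def IsInUtop {m : ℕ} (A : Matrix (Fin m) (Fin m) ℝ) : Prop :=
  IsInU A ∧ ∑ i, ∑ j, A i j = (m : ℝ)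

def IsExtremeIn {m : ℕ} (S : Matrix (Fin m) (Fin m) ℝ → Prop)
    (A : Matrix (Fin m) (Fin m) ℝ) : Prop :=
  S A ∧ ∀ A₁ A₂, S A₁ → S A₂ → A₁ + A₂ = (2 : ℝ) • A → A₁ = A ∧ A₂ = A

def IsRowStochastic {m : ℕ} (X : Matrix (Fin m) (Fin m) ℝ) : Prop :=
  (∀ i j, 0 ≤ X i j) ∧ ∀ i, ∑ j, X i j = 1

def IsSubstochastic {m : ℕ} (X : Matrix (Fin m) (Fin m) ℝ) : Prop :=
  (∀ i j, 0 ≤ X i j) ∧ ∀ i, ∑ j, X i j ≤ 1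

/-!
Call `α` tight for `A` when `∑_{i,j ∈ α} a_ij = |α|`. The block sum is supermodular in `α`, so
tight sets are closed under `∪` and `∩`, and `A` vanishes between `α \ β` and `β \ α` for tight
`α`, `β`. A symmetric direction `D` supported on the support of `A` whose block sums vanish on all
tight sets keeps `A ± t D` in `𝐔_m` for small `t`; at an extreme point such a `D` must be `0`.

Given `a_ij > 0`, take a minimal tight `β ∋ i, j`. Up to swapping `i` and `j`, no proper tight
subset of `β` contains `j`, so the union `U` of the tight subsets of `β` avoiding `j` is tight, and
every tight set either contains `β` or meets it inside `U`. Trading `a_ij` against any other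
positive entry of `β × β \ U × U` is then an admissible direction, so `a_ij` and `a_ji` are the
only positive entries there, and `a_ij + a_ji` (`a_ii` if `i = j`) equals `|β| - |U|`, an
integer. The constraints for `{i}` and `{i, j}` leave only the values claimed.
-/

open Filter Topology

variable {n R : Type*}

def blockSum [AddCommMonoid R] (A : Matrix n n R) (α : Finset n) : R :=
  ∑ i ∈ α, ∑ j ∈ α, A i j

def IsTight (A : Matrix n n ℝ) (α : Finset n) : Prop :=
  blockSum A α = α.card

def symmSingle [DecidableEq n] [Semiring R] (i j : n) : Matrix n n R :=
  single i j 1 + single j i 1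

lemma blockSum_add [AddCommMonoid R] (A B : Matrix n n R) (α : Finset n) :
    blockSum (A + B) α = blockSum A α + blockSum B α := by
  simp only [blockSum, Matrix.add_apply, Finset.sum_add_distrib]

lemma blockSum_sub [AddCommGroup R] (A B : Matrix n n R) (α : Finset n) :
    blockSum (A - B) α = blockSum A α - blockSum B α := by
  simp only [blockSum, Matrix.sub_apply, Finset.sum_sub_distrib]

lemma blockSum_smul [Semiring R] (t : R) (A : Matrix n n R) (α : Finset n) :
    blockSum (t • A) α = t * blockSum A α := by
  simp only [blockSum, Matrix.smul_apply, smul_eq_mul, Finset.mul_sum]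

lemma blockSum_eq_sum_product [AddCommMonoid R] (A : Matrix n n R) (α : Finset n) :
    blockSum A α = ∑ p ∈ α ×ˢ α, A p.1 p.2 := by
  rw [blockSum, Finset.sum_product]

lemma sum_sum_eq_sum_univ [AddCommMonoid R] [Fintype n] [DecidableEq n] (A : Matrix n n R)
    (s t : Finset n) :
    ∑ i ∈ s, ∑ j ∈ t, A i j = ∑ i, ∑ j, if i ∈ s ∧ j ∈ t then A i j else 0 := by
  simp [ite_and, Finset.sum_ite_irrel, Finset.sum_ite_mem]

lemma blockSum_union_add_blockSum_inter [CommSemiring R] [Fintype n] [DecidableEq n]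
    {A : Matrix n n R} (hA : A.IsSymm) (α β : Finset n) :
    blockSum A (α ∪ β) + blockSum A (α ∩ β) =
      blockSum A α + blockSum A β + 2 * ∑ i ∈ α \ β, ∑ j ∈ β \ α, A i j := by
  have hcross : ∑ i ∈ α \ β, ∑ j ∈ β \ α, A i j = ∑ i ∈ β \ α, ∑ j ∈ α \ β, A i j := by
    refine Finset.sum_comm.trans ?_
    simp only [hA.apply]
  rw [two_mul]
  nth_rw 2 [hcross]
  simp only [blockSum, sum_sum_eq_sum_univ, ← Finset.sum_add_distrib]
  refine Finset.sum_congr rfl fun i _ => Finset.sum_congr rfl fun j _ => ?_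
  by_cases hiα : i ∈ α <;> by_cases hiβ : i ∈ β <;> by_cases hjα : j ∈ α <;>
    by_cases hjβ : j ∈ β <;> simp [hiα, hiβ, hjα, hjβ]

lemma blockSum_sub_blockSum_eq_sum [AddCommGroup R] [DecidableEq n] {A : Matrix n n R}
    {U β : Finset n} {s : Finset (n × n)} (hU : U ⊆ β) (hs : s ⊆ β ×ˢ β \ U ×ˢ U)
    (hzero : ∀ p ∈ β ×ˢ β \ U ×ˢ U, p ∉ s → A p.1 p.2 = 0) :
    blockSum A β - blockSum A U = ∑ p ∈ s, A p.1 p.2 := by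
  rw [blockSum_eq_sum_product, blockSum_eq_sum_product,
    ← Finset.sum_sdiff_eq_sub (Finset.product_subset_product hU hU)]
  exact (Finset.sum_subset hs hzero).symm

lemma blockSum_pair [AddCommMonoid R] [DecidableEq n] (A : Matrix n n R) {i j : n} (hij : i ≠ j) :
    blockSum A {i, j} = A i i + A i j + (A j i + A j j) := by
  simp [blockSum, Finset.sum_pair hij]

section symmSingle

variable [DecidableEq n] [Semiring R]

lemma symmSingle_isSymm (i j : n) : (symmSingle i j : Matrix n n R).IsSymm := by
  simp [symmSingle, Matrix.IsSymm, Matrix.transpose_add, add_comm]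

lemma symmSingle_apply (i j x y : n) :
    (symmSingle i j : Matrix n n R) x y =
      (if i = x ∧ j = y then 1 else 0) + (if j = x ∧ i = y then 1 else 0) := by
  simp [symmSingle, single_apply]

lemma blockSum_single (i j : n) (c : R) (α : Finset n) :
    blockSum (single i j c) α = if i ∈ α ∧ j ∈ α then c else 0 := by
  simp [blockSum, single_apply, ite_and, Finset.sum_ite_irrel]

lemma blockSum_symmSingle (i j : n) (α : Finset n) :
    blockSum (symmSingle i j : Matrix n n R) α = if i ∈ α ∧ j ∈ α then 2 else 0 := by
  simp only [symmSingle, blockSum_add, blockSum_single, and_comm (a := j ∈ α)]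
  split_ifs <;> simp [one_add_one_eq_two]

lemma symmSingle_apply_eq_zero_of_apply_eq_zero {A : Matrix n n R} (hA : A.IsSymm)
    {i j x y : n} (hxy : A x y = 0) (hij : A i j ≠ 0) :
    (symmSingle i j : Matrix n n R) x y = 0 := by
  rw [symmSingle_apply]
  split_ifs with h₁ h₂ h₂
  · exact absurd (h₁.1 ▸ h₁.2 ▸ hxy) hij
  · exact absurd (h₁.1 ▸ h₁.2 ▸ hxy) hij
  · exact absurd (hA.apply i j ▸ h₂.1 ▸ h₂.2 ▸ hxy) hij
  · simp

end symmSingle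

lemma eventually_lt_add_mul {a b c : ℝ} (h : c < a) : ∀ᶠ t in 𝓝 0, c < a + t * b :=
  Tendsto.eventually_const_lt h (by simpa using (Continuous.tendsto (by fun_prop) 0 :
    Tendsto (fun t : ℝ => a + t * b) (𝓝 0) (𝓝 (a + 0 * b))))

lemma eventually_add_mul_lt {a b c : ℝ} (h : a < c) : ∀ᶠ t in 𝓝 0, a + t * b < c :=
  Tendsto.eventually_lt_const h (by simpa using (Continuous.tendsto (by fun_prop) 0 :
    Tendsto (fun t : ℝ => a + t * b) (𝓝 0) (𝓝 (a + 0 * b))))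

section tight

variable {m : ℕ} {A : Matrix (Fin m) (Fin m) ℝ} {α β : Finset (Fin m)}

lemma IsInU.isSymm (hA : IsInU A) : A.IsSymm :=
  hA.1

lemma IsInU.nonneg (hA : IsInU A) (i j : Fin m) : 0 ≤ A i j :=
  hA.2.1 i j

lemma IsInU.blockSum_le (hA : IsInU A) (α : Finset (Fin m)) : blockSum A α ≤ α.card :=
  hA.2.2 α

lemma IsInU.sum_sdiff_sdiff_eq_zero (hA : IsInU A) (hα : IsTight A α) (hβ : IsTight A β) :
    ∑ i ∈ α \ β, ∑ j ∈ β \ α, A i j = 0 := by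
  have hcard : ((α ∪ β).card : ℝ) + (α ∩ β).card = α.card + β.card := by
    exact_mod_cast Finset.card_union_add_card_inter α β
  have hnonneg : 0 ≤ ∑ i ∈ α \ β, ∑ j ∈ β \ α, A i j :=
    Finset.sum_nonneg fun i _ => Finset.sum_nonneg fun j _ => hA.nonneg i j
  unfold IsTight at hα hβ
  linarith [blockSum_union_add_blockSum_inter hA.isSymm α β, hA.blockSum_le (α ∪ β),
    hA.blockSum_le (α ∩ β), hα, hβ]

lemma IsInU.apply_eq_zero_of_isTight (hA : IsInU A) (hα : IsTight A α) (hβ : IsTight A β)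
    {i j : Fin m} (hi : i ∈ α \ β) (hj : j ∈ β \ α) : A i j = 0 := by
  have hnonneg : ∀ i, 0 ≤ ∑ j ∈ β \ α, A i j := fun i => Finset.sum_nonneg fun j _ => hA.nonneg i j
  have hrow := (Finset.sum_eq_zero_iff_of_nonneg fun i _ => hnonneg i).1
    (hA.sum_sdiff_sdiff_eq_zero hα hβ) i hi
  exact (Finset.sum_eq_zero_iff_of_nonneg fun j _ => hA.nonneg i j).1 hrow j hj

lemma IsInU.blockSum_union_add_blockSum_inter_of_isTight (hA : IsInU A) (hα : IsTight A α)
    (hβ : IsTight A β) :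
    blockSum A (α ∪ β) + blockSum A (α ∩ β) = (α ∪ β).card + (α ∩ β).card := by
  have hcard : ((α ∪ β).card : ℝ) + (α ∩ β).card = α.card + β.card := by
    exact_mod_cast Finset.card_union_add_card_inter α β
  rw [blockSum_union_add_blockSum_inter hA.isSymm, hA.sum_sdiff_sdiff_eq_zero hα hβ, hα, hβ, hcard]
  ring

lemma IsInU.isTight_union (hA : IsInU A) (hα : IsTight A α) (hβ : IsTight A β) :
    IsTight A (α ∪ β) := by
  unfold IsTight
  linarith [hA.blockSum_union_add_blockSum_inter_of_isTight hα hβ, hA.blockSum_le (α ∪ β),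
    hA.blockSum_le (α ∩ β)]

lemma IsInU.isTight_inter (hA : IsInU A) (hα : IsTight A α) (hβ : IsTight A β) :
    IsTight A (α ∩ β) := by
  unfold IsTight
  linarith [hA.blockSum_union_add_blockSum_inter_of_isTight hα hβ, hA.blockSum_le (α ∪ β),
    hA.blockSum_le (α ∩ β)]

lemma IsInU.isTight_sup (hA : IsInU A) {F : Finset (Finset (Fin m))}
    (hF : ∀ γ ∈ F, IsTight A γ) : IsTight A (F.sup id) :=
  Finset.sup_induction (by simp [IsTight, blockSum]) (fun _ h₁ _ h₂ => hA.isTight_union h₁ h₂) hF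

end tight

section extreme

variable {m : ℕ} {A : Matrix (Fin m) (Fin m) ℝ}

lemma IsInU.eventually_isInU_add_smul (hA : IsInU A) {D : Matrix (Fin m) (Fin m) ℝ}
    (hD : D.IsSymm) (hsupp : ∀ i j, A i j = 0 → D i j = 0)
    (htight : ∀ α, IsTight A α → blockSum D α = 0) :
    ∀ᶠ t in 𝓝 (0 : ℝ), IsInU (A + t • D) := by
  have hentry : ∀ i j, ∀ᶠ t in 𝓝 (0 : ℝ), 0 ≤ A i j + t * D i j := by
    intro i j
    rcases (hA.nonneg i j).eq_or_lt with h | h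
    · simp [← h, hsupp i j h.symm]
    · exact (eventually_lt_add_mul h).mono fun _ => le_of_lt
  have hblock : ∀ α, ∀ᶠ t in 𝓝 (0 : ℝ), blockSum A α + t * blockSum D α ≤ α.card := by
    intro α
    rcases (hA.blockSum_le α).eq_or_lt with h | h
    · simp [h, htight α h]
    · exact (eventually_add_mul_lt h).mono fun _ => le_of_lt
  filter_upwards [eventually_all.2 fun i => eventually_all.2 (hentry i), eventually_all.2 hblock]
    with t hentry hblock
  refine ⟨hA.isSymm.add (hD.smul t), fun i j => by simpa using hentry i j, fun α => ?_⟩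
  have := hblock α
  rwa [← blockSum_smul, ← blockSum_add] at this

lemma IsExtremeIn.eq_zero_of_forall_isTight (hA : IsExtremeIn IsInU A)
    {D : Matrix (Fin m) (Fin m) ℝ} (hD : D.IsSymm) (hsupp : ∀ i j, A i j = 0 → D i j = 0)
    (htight : ∀ α, IsTight A α → blockSum D α = 0) : D = 0 := by
  have hU := hA.1.eventually_isInU_add_smul hD hsupp htight
  obtain ⟨t, ⟨hplus, hminus⟩, ht : t ≠ 0⟩ :=
    (((hU.and ((continuous_neg.tendsto' 0 0 neg_zero).eventually hU)).filter_mono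
      (nhdsWithin_le_nhds (s := {0}ᶜ))).and self_mem_nhdsWithin).exists
  have := (hA.2 _ _ hplus hminus (by module)).1
  simpa [ht] using this

lemma IsExtremeIn.apply_eq_zero_of_mem_product_sdiff (hA : IsExtremeIn IsInU A)
    {β U : Finset (Fin m)} (hsplit : ∀ α, IsTight A α → β ⊆ α ∨ α ∩ β ⊆ U) {i j p q : Fin m}
    (hij : (i, j) ∈ β ×ˢ β \ U ×ˢ U) (hpos : 0 < A i j) (hpq : (p, q) ∈ β ×ˢ β \ U ×ˢ U)
    (hne : (p, q) ∉ ({(i, j), (j, i)} : Finset (Fin m × Fin m))) : A p q = 0 := by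
  by_contra hApq
  have hsymm : A.IsSymm := hA.1.isSymm
  simp only [Finset.mem_sdiff, Finset.mem_product, not_and] at hij hpq
  have hD : symmSingle i j - symmSingle p q = (0 : Matrix (Fin m) (Fin m) ℝ) := by
    refine hA.eq_zero_of_forall_isTight ((symmSingle_isSymm i j).sub (symmSingle_isSymm p q))
      (fun x y hxy => ?_) (fun α hα => ?_)
    · rw [Matrix.sub_apply, symmSingle_apply_eq_zero_of_apply_eq_zero hsymm hxy hpos.ne',
        symmSingle_apply_eq_zero_of_apply_eq_zero hsymm hxy hApq, sub_zero]
    · rw [blockSum_sub, blockSum_symmSingle, blockSum_symmSingle]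
      rcases hsplit α hα with h | h
      · simp [h hij.1.1, h hij.1.2, h hpq.1.1, h hpq.1.2]
      · have hU : ∀ x ∈ α, x ∈ β → x ∈ U := fun x hα hβ => h (Finset.mem_inter.2 ⟨hα, hβ⟩)
        rw [if_neg fun h' => hij.2 (hU i h'.1 hij.1.1) (hU j h'.2 hij.1.2),
          if_neg fun h' => hpq.2 (hU p h'.1 hpq.1.1) (hU q h'.2 hpq.1.2), sub_zero]
  have := congrFun (congrFun hD i) j
  simp only [Finset.mem_insert, Finset.mem_singleton, Prod.mk.injEq, not_or] at hne
  have hqp : ¬(q = i ∧ p = j) := fun h => hne.2 ⟨h.2, h.1⟩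
  simp only [Matrix.sub_apply, symmSingle_apply, Matrix.zero_apply, and_self, if_true,
    if_neg hne.1, if_neg hqp] at this
  split_ifs at this <;> norm_num at this

lemma IsExtremeIn.exists_nat_sum_pair_eq_of_isTight (hA : IsExtremeIn IsInU A) {i j : Fin m}
    (hpos : 0 < A i j) {β : Finset (Fin m)} (hβ : IsTight A β) (hi : i ∈ β) (hj : j ∈ β)
    (hsub : ∀ γ, IsTight A γ → γ ⊂ β → j ∉ γ) :
    ∃ d : ℕ, ∑ p ∈ ({(i, j), (j, i)} : Finset (Fin m × Fin m)), A p.1 p.2 = d := by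
  classical
  set U := (Finset.univ.filter fun γ => IsTight A γ ∧ γ ⊆ β ∧ j ∉ γ).sup id with hUdef
  have hUt : IsTight A U := hA.1.isTight_sup fun γ hγ => (Finset.mem_filter.1 hγ).2.1
  have hUβ : U ⊆ β := Finset.sup_le fun γ hγ => (Finset.mem_filter.1 hγ).2.2.1
  have hjU : j ∉ U := by
    simp only [hUdef, Finset.mem_sup, id, Finset.mem_filter]
    rintro ⟨γ, ⟨-, -, -, hjγ⟩, hj⟩
    exact hjγ hj
  have hsplit : ∀ α, IsTight A α → β ⊆ α ∨ α ∩ β ⊆ U := by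
    intro α hα
    refine or_iff_not_imp_left.2 fun hβα => ?_
    have hαβ := hA.1.isTight_inter hα hβ
    have hssub : α ∩ β ⊂ β := Finset.ssubset_iff_subset_ne.2
      ⟨Finset.inter_subset_right, fun h => hβα (h ▸ Finset.inter_subset_left)⟩
    exact Finset.le_sup (f := id)
      (Finset.mem_filter.2 ⟨Finset.mem_univ _, hαβ, hssub.subset, hsub _ hαβ hssub⟩)
  have hpair : {(i, j), (j, i)} ⊆ β ×ˢ β \ U ×ˢ U := by
    intro p hp
    simp only [Finset.mem_insert, Finset.mem_singleton] at hp
    rcases hp with rfl | rfl <;> simp [hi, hj, hjU]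
  refine ⟨β.card - U.card, ?_⟩
  rw [← blockSum_sub_blockSum_eq_sum hUβ hpair fun p hp hne =>
      hA.apply_eq_zero_of_mem_product_sdiff hsplit (hpair (by simp)) hpos hp hne,
    hβ, hUt, Nat.cast_sub (Finset.card_le_card hUβ)]

lemma IsExtremeIn.exists_isTight_mem_mem (hA : IsExtremeIn IsInU A) {i j : Fin m}
    (hpos : 0 < A i j) : ∃ α, IsTight A α ∧ i ∈ α ∧ j ∈ α := by
  by_contra! h
  have hD := hA.eq_zero_of_forall_isTight (symmSingle_isSymm i j)
    (fun x y hxy => symmSingle_apply_eq_zero_of_apply_eq_zero hA.1.isSymm hxy hpos.ne')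
    (fun α hα => by rw [blockSum_symmSingle, if_neg fun h' => h α hα h'.1 h'.2])
  have := congrFun (congrFun hD i) j
  simp only [symmSingle_apply, Matrix.zero_apply, and_self, if_true] at this
  split_ifs at this <;> norm_num at this

lemma IsExtremeIn.exists_nat_sum_pair_eq (hA : IsExtremeIn IsInU A) {i j : Fin m}
    (hpos : 0 < A i j) :
    ∃ d : ℕ, ∑ p ∈ ({(i, j), (j, i)} : Finset (Fin m × Fin m)), A p.1 p.2 = d := by
  classical
  obtain ⟨β, hβmem, hmin⟩ := Finset.exists_minimal
    (s := Finset.univ.filter fun α => IsTight A α ∧ i ∈ α ∧ j ∈ α)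
    (by simpa [Finset.filter_nonempty_iff] using hA.exists_isTight_mem_mem hpos)
  obtain ⟨hβ, hi, hj⟩ := (Finset.mem_filter.1 hβmem).2
  have hproper : ∀ γ, IsTight A γ → γ ⊂ β → i ∈ γ → j ∉ γ := fun γ hγ hlt hiγ hjγ =>
    hlt.not_ge (hmin (Finset.mem_filter.2 ⟨Finset.mem_univ _, hγ, hiγ, hjγ⟩) hlt.le)
  by_cases hside : ∀ γ, IsTight A γ → γ ⊂ β → j ∉ γ
  · exact hA.exists_nat_sum_pair_eq_of_isTight hpos hβ hi hj hside
  push Not at hside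
  obtain ⟨γ₁, hγ₁, hγ₁β, hjγ₁⟩ := hside
  have hiγ₁ : i ∉ γ₁ := fun hiγ₁ => hproper γ₁ hγ₁ hγ₁β hiγ₁ hjγ₁
  have hside' : ∀ γ, IsTight A γ → γ ⊂ β → i ∉ γ := fun γ₂ hγ₂ hγ₂β hiγ₂ =>
    hpos.ne' (hA.1.apply_eq_zero_of_isTight hγ₂ hγ₁ (Finset.mem_sdiff.2 ⟨hiγ₂, hiγ₁⟩)
      (Finset.mem_sdiff.2 ⟨hjγ₁, hproper γ₂ hγ₂ hγ₂β hiγ₂⟩))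
  rw [Finset.pair_comm]
  exact hA.exists_nat_sum_pair_eq_of_isTight (by rwa [hA.1.isSymm.apply]) hβ hj hi hside'

end extreme

lemma eq_one_or_eq_two_of_eq_natCast {x : ℝ} {d : ℕ} (hd : x = d) (h0 : 0 < x) (h2 : x ≤ 2) :
    x = 1 ∨ x = 2 := by
  subst hd
  have : d ≤ 2 := by exact_mod_cast h2
  interval_cases d <;> simp_all

theorem stmt_10 {m : ℕ} (A : Matrix (Fin m) (Fin m) ℝ)
    (hA : IsExtremeIn IsInU A) :
    (∀ i, A i i = 0 ∨ A i i = 1) ∧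
      (∀ i j, i ≠ j → A i j = 0 ∨ A i j = 1/2 ∨ A i j = 1) := by
  have hU := hA.1
  refine ⟨fun i => ?_, fun i j hij => ?_⟩
  · refine (hU.nonneg i i).eq_or_lt.imp Eq.symm fun hpos => ?_
    obtain ⟨d, hd⟩ := hA.exists_nat_sum_pair_eq hpos
    rw [Finset.pair_eq_singleton, Finset.sum_singleton] at hd
    have hle : A i i ≤ 1 := by simpa [blockSum] using hU.blockSum_le {i}
    exact (eq_one_or_eq_two_of_eq_natCast hd hpos (by linarith)).resolve_right (by linarith)
  · refine (hU.nonneg i j).eq_or_lt.imp Eq.symm fun hpos => ?_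
    obtain ⟨d, hd⟩ := hA.exists_nat_sum_pair_eq hpos
    rw [Finset.sum_pair (by simp [hij])] at hd
    dsimp only at hd
    rw [hU.isSymm.apply i j] at hd
    have hle := hU.blockSum_le {i, j}
    rw [blockSum_pair A hij, Finset.card_pair hij, Nat.cast_ofNat, hU.isSymm.apply i j] at hle
    rcases eq_one_or_eq_two_of_eq_natCast hd (by linarith)
      (by linarith [hU.nonneg i i, hU.nonneg j j]) with h | h
    · exact Or.inl (by linarith)
    · exact Or.inr (by linarith)
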